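/- arXiv:2404.00112 — 3 statements merged into one kernel-verified Lean document; each statement's English description precedes it below -/
import Mathlib

section
/- Every bounded-input bounded-output functional f : ℝⁿ → ℝ (i.e., with finite 2-induced norm) admits a representation f(x) = ⟨k, g(x)⟩ for all x ∈ ℝⁿ, where k ∈ ℝ^{n+1} is a fixed vector and g : ℝⁿ → ℝ^{n+1} is injective and norm-preserving (‖g(x)‖₂ = ‖x‖₂ for all x). -/
/-!
Choose `σ > 0` with `|f x| < σ ‖x‖` for `x ≠ 0` and put `a = f / σ`, so `|a x| < ‖x‖` off the
origin. The vector `g x = (a x, √(‖x‖² - (a x)²) / ‖x‖ • x) ∈ ℝ^{n+1}` then has norm `‖x‖`, and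
`⟪σ e₀, g x⟫ = σ a x = f x`. Injectivity: `‖g x‖` and the first coordinate of `g x` recover `‖x‖`
and `a x`, hence the positive factor in front of `x`, hence `x`.
-/

open scoped RealInnerProductSpace

theorem exists_pos_forall_abs_lt_mul_norm {E : Type*} [NormedAddCommGroup E] (f : E → ℝ)
    (hf : ∃ c : ℝ, ∀ x, |f x| ≤ c * ‖x‖) : ∃ σ > 0, ∀ x, x ≠ 0 → |f x| < σ * ‖x‖ := by
  obtain ⟨c, hc⟩ := hf
  refine ⟨max c 0 + 1, by positivity, fun x hx => (hc x).trans_lt ?_⟩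
  exact mul_lt_mul_of_pos_right (by linarith [le_max_left c 0]) (norm_pos_iff.mpr hx)

theorem abs_le_norm_of_map_zero {E : Type*} [NormedAddCommGroup E] {a : E → ℝ} (ha0 : a 0 = 0)
    (ha : ∀ x, x ≠ 0 → |a x| < ‖x‖) (x : E) : |a x| ≤ ‖x‖ := by
  rcases eq_or_ne x 0 with rfl | hx
  · simp [ha0]
  · exact (ha x hx).le

namespace EuclideanSpace

variable {n : ℕ}

noncomputable def cons (a : ℝ) (v : EuclideanSpace ℝ (Fin n)) : EuclideanSpace ℝ (Fin (n + 1)) :=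
  WithLp.toLp 2 (Fin.cons a v)

@[simp] theorem cons_zero (a : ℝ) (v : EuclideanSpace ℝ (Fin n)) : cons a v 0 = a := rfl

@[simp] theorem cons_succ (a : ℝ) (v : EuclideanSpace ℝ (Fin n)) (j : Fin n) :
    cons a v j.succ = v j := rfl

theorem cons_inj {a b : ℝ} {v w : EuclideanSpace ℝ (Fin n)} :
    cons a v = cons b w ↔ a = b ∧ v = w := by
  refine ⟨fun h => ⟨by simpa using congr($h 0), ?_⟩, fun ⟨hab, hvw⟩ => hab ▸ hvw ▸ rfl⟩
  ext j
  simpa using congr($h j.succ)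

theorem inner_cons (a b : ℝ) (v w : EuclideanSpace ℝ (Fin n)) :
    ⟪cons a v, cons b w⟫ = a * b + ⟪v, w⟫ := by
  simp [PiLp.inner_apply, Fin.sum_univ_succ, mul_comm]

theorem norm_cons_sq (a : ℝ) (v : EuclideanSpace ℝ (Fin n)) :
    ‖cons a v‖ ^ 2 = a ^ 2 + ‖v‖ ^ 2 := by
  rw [← real_inner_self_eq_norm_sq, ← real_inner_self_eq_norm_sq, inner_cons, sq]

/-- The paper's `‖x‖ / ‖(δ, x)‖ • (δ, x)`, parametrised by its first coordinate `a = f x / σ`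
instead of by `δ`. -/
noncomputable def sphereLift (a : ℝ) (x : EuclideanSpace ℝ (Fin n)) :
    EuclideanSpace ℝ (Fin (n + 1)) :=
  cons a ((√(‖x‖ ^ 2 - a ^ 2) / ‖x‖) • x)

theorem norm_sphereLift {a : ℝ} {x : EuclideanSpace ℝ (Fin n)} (h : |a| ≤ ‖x‖) :
    ‖sphereLift a x‖ = ‖x‖ := by
  have ha : a ^ 2 ≤ ‖x‖ ^ 2 := sq_le_sq.mpr (h.trans (le_abs_self _))
  have hscaled : ‖(√(‖x‖ ^ 2 - a ^ 2) / ‖x‖) • x‖ ^ 2 = ‖x‖ ^ 2 - a ^ 2 := by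
    rcases eq_or_ne x 0 with rfl | hx
    · simp only [norm_zero, smul_zero] at ha ⊢
      nlinarith [sq_nonneg a]
    · rw [norm_smul, Real.norm_of_nonneg (by positivity),
        div_mul_cancel₀ _ (norm_ne_zero_iff.mpr hx), Real.sq_sqrt (sub_nonneg.mpr ha)]
  rw [← sq_eq_sq₀ (norm_nonneg _) (norm_nonneg _), sphereLift, norm_cons_sq, hscaled]
  ring

theorem inner_cons_zero_sphereLift (σ a : ℝ) (x : EuclideanSpace ℝ (Fin n)) :
    ⟪cons σ 0, sphereLift a x⟫ = σ * a := by
  rw [sphereLift, inner_cons, inner_zero_left, add_zero]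

theorem sphereLift_comp_injective {a : EuclideanSpace ℝ (Fin n) → ℝ} (ha0 : a 0 = 0)
    (ha : ∀ x, x ≠ 0 → |a x| < ‖x‖) : Function.Injective fun x => sphereLift (a x) x := by
  have hle := abs_le_norm_of_map_zero ha0 ha
  intro x y hxy
  have hnorm : ‖x‖ = ‖y‖ := by
    rw [← norm_sphereLift (hle x), ← norm_sphereLift (hle y)]
    exact congrArg norm hxy
  obtain ⟨hax, hsmul⟩ := cons_inj.mp hxy
  rcases eq_or_ne x 0 with rfl | hx
  · exact (norm_eq_zero.mp (hnorm.symm.trans norm_zero)).symm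
  have hscale : 0 < √(‖x‖ ^ 2 - a x ^ 2) / ‖x‖ := by
    have := sq_lt_sq.mpr ((ha x hx).trans_le (le_abs_self _))
    exact div_pos (Real.sqrt_pos.mpr (sub_pos.mpr this)) (norm_pos_iff.mpr hx)
  rw [hax, hnorm] at hsmul hscale
  exact smul_right_injective _ hscale.ne' hsmul

end EuclideanSpace

open EuclideanSpace

theorem stmt13 {n : ℕ} (f : EuclideanSpace ℝ (Fin n) → ℝ)
    (hf : ∃ c : ℝ, ∀ x, |f x| ≤ c * ‖x‖) :
    ∃ (k : EuclideanSpace ℝ (Fin (n + 1))) (g : EuclideanSpace ℝ (Fin n) →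
        EuclideanSpace ℝ (Fin (n + 1))),
      Function.Injective g ∧ (∀ x, ‖g x‖ = ‖x‖) ∧ ∀ x, f x = ⟪k, g x⟫ := by
  obtain ⟨σ, hσ, hlt⟩ := exists_pos_forall_abs_lt_mul_norm f hf
  have ha0 : f 0 / σ = 0 := by
    obtain ⟨c, hc⟩ := hf
    rw [show f 0 = 0 by simpa using hc 0, zero_div]
  have ha : ∀ x, x ≠ 0 → |f x / σ| < ‖x‖ := fun x hx => by
    rw [abs_div, abs_of_pos hσ, div_lt_iff₀ hσ, mul_comm]
    exact hlt x hx
  refine ⟨cons σ 0, fun x => sphereLift (f x / σ) x, sphereLift_comp_injective ha0 ha,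
    fun x => norm_sphereLift (abs_le_norm_of_map_zero ha0 ha x), fun x => ?_⟩
  rw [inner_cons_zero_sphereLift, mul_div_cancel₀ _ hσ.ne']
end

section
/- Let f : ℝⁿ → ℝᵖ be a function such that each component functional fᵢ has finite 2-induced norm ‖fᵢ‖_{2-2}. Then there exist a rectangular diagonal matrix Σ ∈ ℝ^{p×(p+n)} with nonnegative, non-increasing diagonal entries and an injective, norm-preserving map v : ℝⁿ → ℝ^{p+n} such that f(x) = Σ v(x) for all x ∈ ℝⁿ. -/
theorem stmt14 {n p : ℕ} (f : EuclideanSpace ℝ (Fin n) → EuclideanSpace ℝ (Fin p))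
    (hf : ∀ i : Fin p, ∃ c : ℝ, ∀ x, |f x i| ≤ c * ‖x‖) :
    ∃ (σ : Fin p → ℝ) (S : Matrix (Fin p) (Fin (p + n)) ℝ)
      (v : EuclideanSpace ℝ (Fin n) → EuclideanSpace ℝ (Fin (p + n))),
      (∀ i, 0 ≤ σ i) ∧ Antitone σ ∧
      (∀ (i : Fin p) (j : Fin (p + n)), S i j = if (i : ℕ) = (j : ℕ) then σ i else 0) ∧
      Function.Injective v ∧ (∀ x, ‖v x‖ = ‖x‖) ∧
      ∀ x, f x = (EuclideanSpace.equiv (Fin p) ℝ).symm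
        (S.mulVec (EuclideanSpace.equiv (Fin (p + n)) ℝ (v x))) := by
  choose c hc using hf
  -- norm squared as sum of squares
  have hnorm : ∀ {m : ℕ} (x : EuclideanSpace ℝ (Fin m)), ‖x‖ ^ 2 = ∑ i, (x i) ^ 2 := by
    intro m x
    rw [EuclideanSpace.norm_eq, Real.sq_sqrt (by positivity)]
    simp [sq_abs]
  set S0 : ℝ := ∑ i, (max (c i) 0) ^ 2 with hS0
  have hS0nn : 0 ≤ S0 := by positivity
  set K : ℝ := Real.sqrt S0 + 1 with hK
  have hKpos : 0 < K := by positivity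
  have hKne : K ≠ 0 := ne_of_gt hKpos
  have hS0K : S0 < K ^ 2 := by
    have h1 : Real.sqrt S0 ^ 2 = S0 := Real.sq_sqrt hS0nn
    nlinarith [Real.sqrt_nonneg S0]
  -- bound on sum of f squares
  have hfb : ∀ x, ∑ i, (f x i) ^ 2 ≤ S0 * ‖x‖ ^ 2 := by
    intro x
    rw [hS0, Finset.sum_mul]
    apply Finset.sum_le_sum
    intro i _
    have h1 : |f x i| ≤ max (c i) 0 * ‖x‖ := by
      refine le_trans (hc i x) ?_
      exact mul_le_mul_of_nonneg_right (le_max_left _ _) (norm_nonneg x)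
    have h2 : (f x i) ^ 2 ≤ (max (c i) 0 * ‖x‖) ^ 2 := by
      rw [← sq_abs]
      exact pow_le_pow_left₀ (abs_nonneg _) h1 2
    calc (f x i) ^ 2 ≤ (max (c i) 0 * ‖x‖) ^ 2 := h2
      _ = max (c i) 0 ^ 2 * ‖x‖ ^ 2 := by ring
  -- t x
  set t : EuclideanSpace ℝ (Fin n) → ℝ := fun x => ‖x‖ ^ 2 - ∑ i, (f x i / K) ^ 2 with ht
  have hsumδ : ∀ x, ∑ i, (f x i / K) ^ 2 = (∑ i, (f x i) ^ 2) / K ^ 2 := by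
    intro x
    rw [Finset.sum_div]
    exact Finset.sum_congr rfl fun i _ => div_pow _ _ _
  have htlb : ∀ x, (1 - S0 / K ^ 2) * ‖x‖ ^ 2 ≤ t x := by
    intro x
    have := hfb x
    have hK2 : (0:ℝ) < K ^ 2 := by positivity
    rw [ht]
    simp only [hsumδ]
    have h2 : (∑ i, (f x i) ^ 2) / K ^ 2 ≤ S0 * ‖x‖ ^ 2 / K ^ 2 := by gcongr
    have h3 : S0 * ‖x‖ ^ 2 / K ^ 2 = S0 / K ^ 2 * ‖x‖ ^ 2 := by ring
    linarith [h2, h3.le]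
  have htnn : ∀ x, 0 ≤ t x := by
    intro x
    refine le_trans ?_ (htlb x)
    have : 0 ≤ 1 - S0 / K ^ 2 := by
      have : S0 / K ^ 2 < 1 := (div_lt_one (by positivity)).mpr hS0K
      linarith
    positivity
  have htpos : ∀ x, x ≠ 0 → 0 < t x := by
    intro x hx
    have hxn : 0 < ‖x‖ := norm_pos_iff.mpr hx
    refine lt_of_lt_of_le ?_ (htlb x)
    have : 0 < 1 - S0 / K ^ 2 := by
      have : S0 / K ^ 2 < 1 := (div_lt_one (by positivity)).mpr hS0K
      linarith
    positivity
  have hf0 : f 0 = 0 := by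
    ext i
    have := hc i 0
    simp only [norm_zero, mul_zero] at this
    have : |f 0 i| ≤ 0 := this
    simpa [abs_nonneg, le_antisymm this (abs_nonneg _)] using abs_eq_zero.mp (le_antisymm this (abs_nonneg _))
  -- define v
  set w : EuclideanSpace ℝ (Fin n) → Fin n → ℝ :=
    fun x i => (Real.sqrt (t x) / ‖x‖) * x i with hw
  set v : EuclideanSpace ℝ (Fin n) → EuclideanSpace ℝ (Fin (p + n)) :=
    fun x => (EuclideanSpace.equiv (Fin (p+n)) ℝ).symm
      (Fin.append (fun i => f x i / K) (w x)) with hv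
  have hvcast : ∀ x (i : Fin p), v x (Fin.castAdd n i) = f x i / K := by
    intro x i
    simp [hv, Fin.append_left]
  have hvnat : ∀ x (i : Fin n), v x (Fin.natAdd p i) = w x i := by
    intro x i
    simp [hv, Fin.append_right]
  -- sum of w squares = t x
  have hwsum : ∀ x, ∑ i, (w x i) ^ 2 = t x := by
    intro x
    by_cases hx : x = 0
    · subst hx
      have ht0 : t 0 = 0 := by
        rw [ht]; simp [hf0, show ∀ i : Fin p, (0:EuclideanSpace ℝ (Fin p)) i = 0 from fun i => rfl]
      rw [ht0]
      apply Finset.sum_eq_zero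
      intro i _
      simp [hw, show (0:EuclideanSpace ℝ (Fin n)) i = 0 from rfl]
    · have hxn : 0 < ‖x‖ := norm_pos_iff.mpr hx
      have : ∑ i, (w x i) ^ 2 = (Real.sqrt (t x) / ‖x‖) ^ 2 * ∑ i, (x i) ^ 2 := by
        rw [Finset.mul_sum]; congr 1; ext i; rw [hw]; ring
      rw [this, ← hnorm, div_pow, Real.sq_sqrt (htnn x)]
      field_simp
  -- sum of v squares
  have hvsum : ∀ x, ∑ j, (v x j) ^ 2 = ‖x‖ ^ 2 := by
    intro x
    rw [Fin.sum_univ_add]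
    simp only [hvcast, hvnat]
    rw [hwsum, ht]
    ring
  have hvn : ∀ x, ‖v x‖ = ‖x‖ := by
    intro x
    have h1 : ‖v x‖ ^ 2 = ‖x‖ ^ 2 := by rw [hnorm (v x)]; exact hvsum x
    rw [← Real.sqrt_sq (norm_nonneg (v x)), h1, Real.sqrt_sq (norm_nonneg x)]
  -- injectivity
  have hvinj : Function.Injective v := by
    intro x y hxy
    have hnxy : ‖x‖ = ‖y‖ := by rw [← hvn x, ← hvn y, hxy]
    have hcomp : ∀ j, v x j = v y j := fun j => by rw [hxy]
    have hfcomp : ∀ i : Fin p, f x i = f y i := by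
      intro i
      have := hcomp (Fin.castAdd n i)
      rw [hvcast, hvcast] at this
      field_simp at this
      exact this
    have htxy : t x = t y := by
      rw [ht]; simp only [hnxy]
      congr 1
      apply Finset.sum_congr rfl
      intro i _
      rw [hfcomp i]
    by_cases hx : x = 0
    · subst hx
      have : ‖y‖ = 0 := by rw [← hnxy, norm_zero]
      exact (norm_eq_zero.mp this).symm
    · have hy : y ≠ 0 := by
        intro h; subst h; rw [norm_zero] at hnxy; exact hx (norm_eq_zero.mp hnxy)
      have hxn : 0 < ‖x‖ := norm_pos_iff.mpr hx
      have hcoef : 0 < Real.sqrt (t x) / ‖x‖ := by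
        apply div_pos (Real.sqrt_pos.mpr (htpos x hx)) hxn
      ext i
      have := hcomp (Fin.natAdd p i)
      rw [hvnat, hvnat, hw] at this
      simp only [htxy, hnxy] at this
      have hcoef' : 0 < Real.sqrt (t y) / ‖y‖ := by
        rw [← htxy, ← hnxy]; exact hcoef
      exact mul_left_cancel₀ (ne_of_gt hcoef') this
  refine ⟨fun _ => K, Matrix.of fun (i : Fin p) (j : Fin (p + n)) => if (i : ℕ) = (j : ℕ) then K else 0, v,
    fun i => le_of_lt hKpos, fun a b _ => le_refl K, fun i j => rfl, hvinj, hvn, ?_⟩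
  intro x
  have hmul : ∀ u : Fin (p+n) → ℝ, ∀ i : Fin p,
      (Matrix.of fun (i : Fin p) (j : Fin (p + n)) => if (i : ℕ) = (j : ℕ) then K else 0).mulVec u i
        = K * u (Fin.castAdd n i) := by
    intro u i
    rw [Matrix.mulVec, dotProduct]
    rw [Finset.sum_eq_single (Fin.castAdd n i)]
    · simp
    · intro b _ hb
      have hne : (i : ℕ) ≠ (b : ℕ) := fun h => hb (Fin.ext h.symm)
      simp [hne]
    · exact fun h => absurd (Finset.mem_univ _) h
  ext i
  show f x i = (Matrix.of fun (i : Fin p) (j : Fin (p + n)) =>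
      if (i : ℕ) = (j : ℕ) then K else 0).mulVec
      (⇑(EuclideanSpace.equiv (Fin (p+n)) ℝ) (v x)) i
  rw [hmul]
  show f x i = K * v x (Fin.castAdd n i)
  rw [hvcast]
  field_simp
end

section
/- Let σ₁,…,σ_p be positive reals and f₁,…,f_p : ℝⁿ → ℝ functions. Fix x ≠ 0 with fᵢ(x) ≠ 0 for all i, set dᵢ = σᵢ²‖x‖₂²/fᵢ(x)² − 1, and suppose δ ∈ ℝᵖ with δᵢ ≥ 0 satisfies, for each i, dᵢδᵢ² − Σ_{j≠i} δⱼ² = ‖x‖₂². Then for each i: σᵢ² δᵢ² ‖x‖₂² / (‖x‖₂² + ‖δ‖₂²) = fᵢ(x)². -/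
theorem stmt16 {n p : ℕ} (σ : Fin p → ℝ) (hσ : ∀ i, 0 < σ i)
    (f : Fin p → EuclideanSpace ℝ (Fin n) → ℝ)
    (x : EuclideanSpace ℝ (Fin n)) (hx : x ≠ 0) (hfx : ∀ i, f i x ≠ 0)
    (d : Fin p → ℝ) (hd : ∀ i, d i = (σ i) ^ 2 * ‖x‖ ^ 2 / (f i x) ^ 2 - 1)
    (δ : Fin p → ℝ) (hδnn : ∀ i, 0 ≤ δ i)
    (hsys : ∀ i, d i * (δ i) ^ 2 - ∑ j ∈ Finset.univ.erase i, (δ j) ^ 2 = ‖x‖ ^ 2) :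
    ∀ i, (σ i) ^ 2 * (δ i) ^ 2 * ‖x‖ ^ 2 / (‖x‖ ^ 2 + ∑ j, (δ j) ^ 2) = (f i x) ^ 2 := by
  intro i
  have hxn : ‖x‖ ≠ 0 := norm_ne_zero_iff.mpr hx
  have hf := hfx i
  have hsum : ∑ j, (δ j) ^ 2 = (δ i) ^ 2 + ∑ j ∈ Finset.univ.erase i, (δ j) ^ 2 :=
    (Finset.add_sum_erase _ _ (Finset.mem_univ i)).symm
  have key := hsys i
  rw [hd i] at key
  have hpos : 0 < ‖x‖ ^ 2 + ∑ j, (δ j) ^ 2 := by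
    have : 0 ≤ ∑ j, (δ j) ^ 2 := Finset.sum_nonneg fun j _ => sq_nonneg _
    positivity
  rw [hsum]
  field_simp at key ⊢
  nlinarith [key]
end
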